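/- For all integers p ≥ 2 and 1 ≤ p₁ ≤ p, ∑_{k=1}^{p₁-1} C(p₁-1,k)·(k-3)!·(p-1-k)! ≤ C·(p-1)!·(p₁-1)!/(p₁-1)! where one uses (p-1-k)!/(p₁-1-k)! ≤ (p-1)!/(p₁-1)! and ∑_{k=1}^{p₁-1} C(p₁-1,k)(k-3)!(p₁-1-k)! ≤ C(p₁-1)!; in particular the total is at most C(p-1)! for an absolute constant C. -/

import Mathlib

/-!
Since `C(p₁-1, k) ≤ C(p-1, k)`, each term is at most `(p-1)! · (k-3)!/k!`, and the series
`∑_{k ≥ 1} (k-3)!/k!` telescopes against `1/(k-1) - 1/k` from `k = 2` on, so it is at most `2`.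
-/

def efact (m : ℤ) : ℕ := if m < 0 then 1 else Nat.factorial m.toNat

open Nat

@[simp]
lemma efact_natCast (n : ℕ) : efact n = n ! := by
  simp [efact]

lemma efact_of_neg {m : ℤ} (hm : m < 0) : efact m = 1 := if_pos hm

lemma efact_sub_three_mul_le {k : ℕ} (hk : 2 ≤ k) :
    efact ((k : ℤ) - 3) * (k * (k - 1)) ≤ k ! := by
  rcases Nat.lt_or_ge k 3 with hk3 | hk3
  · obtain rfl : k = 2 := by omega
    simp [efact_of_neg]
  · obtain ⟨j, rfl⟩ := Nat.exists_eq_add_of_le' hk3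
    rw [show ((j + 3 : ℕ) : ℤ) - 3 = j by push_cast; ring, efact_natCast,
      show j + 3 - 1 = j + 2 from rfl,
      show (j + 3)! = (j + 3) * ((j + 2) * ((j + 1) * j !)) from rfl]
    have : j ! ≤ (j + 1) * j ! := Nat.le_mul_of_pos_left _ j.succ_pos
    calc j ! * ((j + 3) * (j + 2)) = (j + 3) * ((j + 2) * j !) := by ring
      _ ≤ (j + 3) * ((j + 2) * ((j + 1) * j !)) := by gcongr

lemma sum_efact_sub_three_div_factorial_le {n : ℕ} (hn : 1 ≤ n) :
    ∑ k ∈ Finset.Icc 1 n, (efact ((k : ℤ) - 3) : ℝ) / k ! ≤ 2 - 1 / n := by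
  induction n, hn using Nat.le_induction with
  | base => norm_num [efact_of_neg]
  | succ n hn ih =>
    have hterm : (efact (((n + 1 : ℕ) : ℤ) - 3) : ℝ) / (n + 1)! ≤ 1 / n - 1 / (n + 1) := by
      have hle :
          ((efact (((n + 1 : ℕ) : ℤ) - 3) * ((n + 1) * (n + 1 - 1)) : ℕ) : ℝ) ≤ (n + 1)! :=
        mod_cast efact_sub_three_mul_le (by omega)
      have hn0 : (0 : ℝ) < n := by exact_mod_cast hn
      rw [div_sub_div _ _ hn0.ne' (by positivity),
        div_le_div_iff₀ (by positivity) (by positivity)]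
      push_cast at hle ⊢
      nlinarith
    rw [Finset.sum_Icc_succ_top (by omega)]
    push_cast at hterm ⊢
    linarith

lemma sum_efact_sub_three_div_factorial_le_two (n : ℕ) :
    ∑ k ∈ Finset.Icc 1 n, (efact ((k : ℤ) - 3) : ℝ) / k ! ≤ 2 := by
  rcases Nat.eq_zero_or_pos n with rfl | hn
  · simp
  · have : (0 : ℝ) ≤ 1 / n := by positivity
    linarith [sum_efact_sub_three_div_factorial_le hn]

lemma choose_mul_factorial_mul_factorial_le {n m k : ℕ} (hkn : k ≤ n) (hnm : n ≤ m) :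
    n.choose k * k ! * (m - k)! ≤ m ! :=
  calc n.choose k * k ! * (m - k)! ≤ m.choose k * k ! * (m - k)! := by gcongr
    _ = m ! := Nat.choose_mul_factorial_mul_factorial (hkn.trans hnm)

lemma choose_mul_mul_factorial_sub_le {n m k : ℕ} (hkn : k ≤ n) (hnm : n ≤ m) {a : ℝ}
    (ha : 0 ≤ a) : n.choose k * a * (m - k)! ≤ m ! * (a / k !) := by
  have h : ((n.choose k * k ! * (m - k)! : ℕ) : ℝ) ≤ m ! :=
    mod_cast choose_mul_factorial_mul_factorial_le hkn hnm
  rw [mul_div_assoc', le_div_iff₀ (by positivity)]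
  push_cast at h
  nlinarith

/-- For all `p ≥ 2` and `1 ≤ p₁ ≤ p`,
`∑_{k=1}^{p₁-1} C(p₁-1,k) (k-3)! (p-1-k)! ≤ C (p-1)!` for an absolute constant
`C`, with `m! = 1` for negative `m`. -/
theorem binom_efact_two_level_sum_le : ∃ C : ℝ, 0 < C ∧
    ∀ p p₁ : ℕ, 2 ≤ p → 1 ≤ p₁ → p₁ ≤ p →
      ∑ k ∈ Finset.Icc 1 (p₁ - 1),
          (Nat.choose (p₁ - 1) k : ℝ) * (efact ((k : ℤ) - 3) : ℝ) *
            (efact ((p : ℤ) - 1 - (k : ℤ)) : ℝ)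
        ≤ C * (Nat.factorial (p - 1) : ℝ) := by
  refine ⟨2, two_pos, fun p p₁ _ _ hp₁ => ?_⟩
  calc ∑ k ∈ Finset.Icc 1 (p₁ - 1),
          ((p₁ - 1).choose k : ℝ) * efact ((k : ℤ) - 3) * efact ((p : ℤ) - 1 - k)
      ≤ ∑ k ∈ Finset.Icc 1 (p₁ - 1), ((p - 1)! : ℝ) * (efact ((k : ℤ) - 3) / k !) := by
        refine Finset.sum_le_sum fun k hk => ?_
        have hk : k ≤ p₁ - 1 := (Finset.mem_Icc.mp hk).2
        rw [show (p : ℤ) - 1 - k = ((p - 1 - k : ℕ) : ℤ) by omega, efact_natCast]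
        exact choose_mul_mul_factorial_sub_le hk (by omega) (by positivity)
    _ = (p - 1)! * ∑ k ∈ Finset.Icc 1 (p₁ - 1), (efact ((k : ℤ) - 3) : ℝ) / k ! :=
        (Finset.mul_sum ..).symm
    _ ≤ 2 * (p - 1)! := by
        rw [mul_comm 2]
        exact mul_le_mul_of_nonneg_left (sum_efact_sub_three_div_factorial_le_two _) (by positivity)
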